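/- Let m ≥ 2 and let n_1, n_2 be integers with n_1 ≥ n_2 and 1 ≤ n_2 ≤ m − 1. Alice has a winning strategy in the achievement game (K_{1,m}, K_{n_1,n_2}, +) if and only if n_1 ≥ 2m − 1. -/

import Mathlib

/-!
If `n₁ ≥ 2m - 1`, Alice wins by always claiming an edge at one fixed vertex `u` of the
`n₂`-side: `u` has `n₁ ≥ 2m - 1` incident edges, so all of her first `m` moves fit there,
and by then Bob owns only `m - 1` edges, too few for a `K_{1,m}`.

If `n₁ ≤ 2m - 2`, Bob splits the `n₁`-side into blocks `{2q, 2q + 1}` and answers Alice's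
edge `x u` by the edge `y u`, where `y` is the other vertex of the block of `x`. Alice then
never owns both edges of such a pair, so a blue star centred on the `n₂`-side has at most
one leaf per block, hence at most `⌈n₁ / 2⌉ ≤ m - 1` leaves, and a star centred on the
`n₁`-side has at most `n₂ ≤ m - 1` leaves.
-/

namespace AchievementGame

/-- A strategy for the achievement game: given the history of all moves played so far
(earliest first), produce the next move (an edge, i.e. an element of `Sym2`). -/
def Strategy (α : Type*) : Type _ := List (Sym2 α) → Sym2 α

/-- A strategy is valid for the host graph `G` if, whenever some edge of `G` is still
uncolored, it chooses an uncolored edge of `G`. -/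
def Strategy.Valid {α : Type*} (G : SimpleGraph α) (s : Strategy α) : Prop :=
  ∀ l : List (Sym2 α), (∃ e ∈ G.edgeSet, e ∉ l) → s l ∈ G.edgeSet ∧ s l ∉ l

/-- The history of the first `n` moves when Alice plays strategy `σ` and Bob plays
strategy `τ`; Alice moves first and the players alternate. -/
def hist {α : Type*} (σ τ : Strategy α) : ℕ → List (Sym2 α)
  | 0 => []
  | n + 1 => hist σ τ n ++ [(if n % 2 = 0 then σ else τ) (hist σ τ n)]

/-- The `n`-th move (0-indexed): even indices are Alice's (blue) moves,
odd indices are Bob's (red) moves. -/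
def move {α : Type*} (σ τ : Strategy α) (n : ℕ) : Sym2 α :=
  (if n % 2 = 0 then σ else τ) (hist σ τ n)

/-- The set `s` of edges contains a copy of the graph `F`. -/
def HasCopy {α β : Type*} (F : SimpleGraph β) (s : Set (Sym2 α)) : Prop :=
  ∃ f : β ↪ α, ∀ a b, F.Adj a b → s(f a, f b) ∈ s

/-- Alice has a winning strategy in the achievement game `(F, G, +)`: Alice has a valid
strategy such that against every valid strategy of Bob, at some legal move of Alice
(her `(k+1)`-st move, which exists since `2k+1 ≤ |E(G)|`) the blue edges contain a copy
of `F`, while the red edges played strictly before do not. -/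
def AliceWins {α β : Type*} (F : SimpleGraph β) (G : SimpleGraph α) : Prop :=
  ∃ σ : Strategy α, Strategy.Valid G σ ∧ ∀ τ : Strategy α, Strategy.Valid G τ →
    ∃ k : ℕ, 2 * k + 1 ≤ G.edgeSet.ncard ∧
      HasCopy F {e | ∃ i ≤ k, e = move σ τ (2 * i)} ∧
      ¬ HasCopy F {e | ∃ i < k, e = move σ τ (2 * i + 1)}

/-- The matching `mK₂` consisting of `m` pairwise disjoint edges. -/
def matching (m : ℕ) : SimpleGraph (Fin m ⊕ Fin m) :=
  SimpleGraph.fromRel (fun a b => ∃ i, a = Sum.inl i ∧ b = Sum.inr i)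

/-- The star `K_{1,m}`: the center `0` joined to `m` leaves. -/
def star (m : ℕ) : SimpleGraph (Fin (m + 1)) :=
  SimpleGraph.fromRel (fun a _ => a = 0)

/-- The double star `S_{m,n}`: disjoint stars `K_{1,m}` and `K_{1,n}` with an edge
joining their centers `Sum.inl 0` and `Sum.inr 0`. -/
def doubleStar (m n : ℕ) : SimpleGraph (Fin (m + 1) ⊕ Fin (n + 1)) :=
  SimpleGraph.fromRel (fun a b =>
    (a = Sum.inl 0 ∧ ∃ i, b = Sum.inl i) ∨
    (a = Sum.inr 0 ∧ ∃ j, b = Sum.inr j) ∨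
    (a = Sum.inl 0 ∧ b = Sum.inr 0))

/-- The disjoint union `K_{1,m} ∪ nK₂` of a star and a matching. -/
def starMatching (m n : ℕ) : SimpleGraph (Fin (m + 1) ⊕ (Fin n ⊕ Fin n)) :=
  SimpleGraph.fromRel (fun a b =>
    (a = Sum.inl 0 ∧ ∃ i, b = Sum.inl i) ∨
    (∃ i, a = Sum.inr (Sum.inl i) ∧ b = Sum.inr (Sum.inr i)))

end AchievementGame

namespace AchievementGame

variable {α : Type*}

section Play

variable (σ τ : Strategy α)

lemma hist_succ (n : ℕ) : hist σ τ (n + 1) = hist σ τ n ++ [move σ τ n] := rfl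

lemma hist_eq_map_range (n : ℕ) : hist σ τ n = (List.range n).map (move σ τ) := by
  induction n with
  | zero => rfl
  | succ n ih => rw [hist_succ, ih, List.range_succ, List.map_append, List.map_singleton]

lemma mem_hist {n : ℕ} {e : Sym2 α} : e ∈ hist σ τ n ↔ ∃ i < n, move σ τ i = e := by
  simp [hist_eq_map_range]

lemma length_hist (n : ℕ) : (hist σ τ n).length = n := by
  simp [hist_eq_map_range]

lemma getLast?_hist_succ (n : ℕ) : (hist σ τ (n + 1)).getLast? = some (move σ τ n) := by
  rw [hist_succ, List.getLast?_concat]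

lemma move_two_mul (i : ℕ) : move σ τ (2 * i) = σ (hist σ τ (2 * i)) := by
  simp [move]

lemma move_two_mul_add_one (i : ℕ) : move σ τ (2 * i + 1) = τ (hist σ τ (2 * i + 1)) := by
  simp [move, Nat.add_mod]

lemma exists_mem_notMem_hist {T : Set (Sym2 α)} {n : ℕ} (hn : n < T.ncard) :
    ∃ e ∈ T, e ∉ hist σ τ n := by
  classical
  by_contra! hT
  have hsub : T ⊆ ↑(hist σ τ n).toFinset := fun e he => by simpa using hT e he
  have := (Set.ncard_le_ncard hsub (Finset.finite_toSet _)).trans_eq (Set.ncard_coe_finset _)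
  have := (this.trans (hist σ τ n).toFinset_card_le).trans_eq (length_hist σ τ n)
  omega

lemma ncard_setOf_exists_lt_le {β : Type*} (f : ℕ → β) (k : ℕ) :
    {e | ∃ i < k, e = f i}.ncard ≤ k := by
  have : {e | ∃ i < k, e = f i} = f '' Set.Iio k := by
    ext e; simp [eq_comm]
  rw [this]
  exact (Set.ncard_image_le (Set.finite_Iio k)).trans_eq (by simp)

variable {G : SimpleGraph α} {σ τ}

lemma move_legal (hσ : σ.Valid G) (hτ : τ.Valid G) {n : ℕ} (hn : n < G.edgeSet.ncard) :
    move σ τ n ∈ G.edgeSet ∧ move σ τ n ∉ hist σ τ n := by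
  unfold move
  split
  · exact hσ _ (exists_mem_notMem_hist σ τ hn)
  · exact hτ _ (exists_mem_notMem_hist σ τ hn)

lemma move_injOn (hσ : σ.Valid G) (hτ : τ.Valid G) :
    Set.InjOn (move σ τ) (Set.Iio G.edgeSet.ncard) := by
  intro i hi j hj hij
  by_contra hne
  rcases Nat.lt_or_gt_of_ne hne with h | h
  · exact (move_legal hσ hτ hj).2 ((mem_hist σ τ).2 ⟨i, h, hij⟩)
  · exact (move_legal hσ hτ hi).2 ((mem_hist σ τ).2 ⟨j, h, hij.symm⟩)

end Play

section Prefer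

open Classical in
noncomputable def Strategy.prefer [Nonempty α] (G : SimpleGraph α)
    (S : List (Sym2 α) → Set (Sym2 α)) : Strategy α := fun l =>
  if h : ∃ e ∈ S l, e ∈ G.edgeSet ∧ e ∉ l then h.choose
  else if h' : ∃ e ∈ G.edgeSet, e ∉ l then h'.choose
  else s(Classical.arbitrary α, Classical.arbitrary α)

variable [Nonempty α] {G : SimpleGraph α} {S : List (Sym2 α) → Set (Sym2 α)}
  {l : List (Sym2 α)}

lemma Strategy.prefer_spec (h : ∃ e ∈ S l, e ∈ G.edgeSet ∧ e ∉ l) :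
    prefer G S l ∈ S l ∧ prefer G S l ∈ G.edgeSet ∧ prefer G S l ∉ l := by
  rw [prefer, dif_pos h]
  exact h.choose_spec

lemma Strategy.prefer_valid : (prefer G S).Valid G := by
  intro l h
  by_cases hS : ∃ e ∈ S l, e ∈ G.edgeSet ∧ e ∉ l
  · exact (prefer_spec hS).2
  · rw [prefer, dif_neg hS, dif_pos h]
    exact h.choose_spec

end Prefer

section Star

variable {m : ℕ} {s : Set (Sym2 α)}

lemma hasCopy_star_iff : HasCopy (star m) s ↔
    ∃ v, ∃ w : Fin m → α, Function.Injective w ∧ ∀ i, w i ≠ v ∧ s(v, w i) ∈ s := by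
  constructor
  · rintro ⟨f, hf⟩
    refine ⟨f 0, f ∘ Fin.succ, f.injective.comp (Fin.succ_injective _),
      fun i => ⟨fun h => Fin.succ_ne_zero i (f.injective h), hf _ _ ?_⟩⟩
    simp [star, (Fin.succ_ne_zero i).symm]
  · rintro ⟨v, w, hw, hwv⟩
    refine ⟨⟨Fin.cases v w, ?_⟩, ?_⟩
    · intro a b hab
      cases a using Fin.cases <;> cases b using Fin.cases <;>
        simp_all [eq_comm, hw.eq_iff]
    · intro a b hab
      obtain ⟨hne, rfl | rfl⟩ := (SimpleGraph.fromRel_adj _ _ _).1 hab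
      · cases b using Fin.cases
        · exact absurd rfl hne
        · exact (hwv _).2
      · cases a using Fin.cases
        · exact absurd rfl hne
        · exact Sym2.eq_swap ▸ (hwv _).2

lemma le_ncard_of_hasCopy_star (hs : s.Finite) (h : HasCopy (star m) s) : m ≤ s.ncard := by
  obtain ⟨v, w, hw, hwv⟩ := hasCopy_star_iff.1 h
  have hinj : Function.Injective fun i => s(v, w i) := fun i j hij => hw (Sym2.congr_right.1 hij)
  calc m = (Set.range fun i => s(v, w i)).ncard := by
        rw [Set.ncard_range_of_injective hinj, Nat.card_fin]
    _ ≤ s.ncard := Set.ncard_le_ncard (by rintro _ ⟨i, rfl⟩; exact (hwv i).2) hs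

end Star

theorem aliceWins_star_of_le_ncard_neighborSet [Finite α] {G : SimpleGraph α} {m : ℕ}
    (hm : 1 ≤ m) (v : α) (hv : 2 * m - 1 ≤ (G.neighborSet v).ncard) :
    AliceWins (star m) G := by
  classical
  have : Nonempty α := ⟨v⟩
  have hinc : (G.incidenceSet v).ncard = (G.neighborSet v).ncard :=
    Set.ncard_congr' (G.incidenceSetEquivNeighborSet v)
  have hE : 2 * m - 1 ≤ G.edgeSet.ncard :=
    hv.trans (hinc ▸ Set.ncard_le_ncard (G.incidenceSet_subset v))
  set σ := Strategy.prefer G fun _ => G.incidenceSet v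
  refine ⟨σ, Strategy.prefer_valid, fun τ hτ => ⟨m - 1, by omega, ?_, fun hred => ?_⟩⟩
  · have hmove (i : Fin m) : move σ τ (2 * i) ∈ G.incidenceSet v := by
      obtain ⟨e, he, hfree⟩ := exists_mem_notMem_hist σ τ (T := G.incidenceSet v) (n := 2 * i)
        (by omega)
      rw [move_two_mul]
      exact (Strategy.prefer_spec ⟨e, he, he.1, hfree⟩).1
    have hspec (i : Fin m) : s(v, Sym2.Mem.other (hmove i).2) = move σ τ (2 * i) :=
      Sym2.other_spec _
    refine hasCopy_star_iff.2 ⟨v, fun i => Sym2.Mem.other (hmove i).2, fun i j hij => ?_,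
      fun i => ⟨Sym2.other_ne (G.not_isDiag_of_mem_edgeSet (hmove i).1) _,
        ⟨i, by omega, hspec i⟩⟩⟩
    have := move_injOn Strategy.prefer_valid hτ (Set.mem_Iio.2 (by omega))
      (Set.mem_Iio.2 (by omega)) ((hspec i).symm.trans ((congrArg (s(v, ·)) hij).trans (hspec j)))
    exact Fin.ext (by omega)
  · have := le_ncard_of_hasCopy_star (Set.toFinite _) hred
    have := ncard_setOf_exists_lt_le (fun i => move σ τ (2 * i + 1)) (m - 1)
    omega

noncomputable def pairingStrategy [Nonempty α] (G : SimpleGraph α)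
    (P : Sym2 α → Sym2 α → Prop) : Strategy α :=
  Strategy.prefer G fun l => {e | ∃ a ∈ l.getLast?, P a e}

/-- If Alice ever claimed the partner `b` of an earlier move `a` of hers, then `b` was still
free when Bob answered `a`, so Bob would have claimed it himself. -/
theorem not_rel_move_pairingStrategy [Nonempty α] {G : SimpleGraph α}
    {P : Sym2 α → Sym2 α → Prop} (hsymm : ∀ a b, P a b → P b a)
    (hunique : ∀ a b c, P a b → P a c → b = c)
    {σ : Strategy α} (hσ : σ.Valid G) {i j : ℕ} (hij : i ≠ j) (hi : 2 * i < G.edgeSet.ncard)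
    (hj : 2 * j < G.edgeSet.ncard) :
    ¬ P (move σ (pairingStrategy G P) (2 * i)) (move σ (pairingStrategy G P) (2 * j)) := by
  wlog hlt : i < j generalizing i j
  · exact fun h => this hij.symm hj hi (by omega) (hsymm _ _ h)
  set τ := pairingStrategy G P
  have hτ : τ.Valid G := Strategy.prefer_valid
  have hinj := move_injOn hσ hτ
  intro hP
  have hfree : move σ τ (2 * j) ∉ hist σ τ (2 * i + 1) := by
    intro hmem
    obtain ⟨t, ht, heq⟩ := (mem_hist σ τ).1 hmem
    have := hinj (Set.mem_Iio.2 (by omega)) (Set.mem_Iio.2 (by omega)) heq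
    omega
  obtain ⟨a, ha, hPa⟩ := (Strategy.prefer_spec (S := fun l => {e | ∃ a ∈ l.getLast?, P a e})
    ⟨_, ⟨_, getLast?_hist_succ σ τ (2 * i), hP⟩, (move_legal hσ hτ hj).1, hfree⟩).1
  rw [getLast?_hist_succ, Option.mem_some_iff] at ha
  subst ha
  have : move σ τ (2 * i + 1) = move σ τ (2 * j) := by
    rw [move_two_mul_add_one]
    exact hunique _ _ _ hPa hP
  have := hinj (Set.mem_Iio.2 (by omega)) (Set.mem_Iio.2 (by omega)) this
  omega

section CompleteBipartite

variable {n₁ n₂ : ℕ}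

def bipartitePairing (n₁ n₂ : ℕ) (e f : Sym2 (Fin n₁ ⊕ Fin n₂)) : Prop :=
  ∃ x y u, x ≠ y ∧ x.val / 2 = y.val / 2 ∧ e = s(.inl x, .inr u) ∧ f = s(.inl y, .inr u)

lemma bipartitePairing_symm (e f : Sym2 (Fin n₁ ⊕ Fin n₂)) :
    bipartitePairing n₁ n₂ e f → bipartitePairing n₁ n₂ f e := by
  rintro ⟨x, y, u, hxy, hq, rfl, rfl⟩
  exact ⟨y, x, u, hxy.symm, hq.symm, rfl, rfl⟩

lemma bipartitePairing_unique (e f f' : Sym2 (Fin n₁ ⊕ Fin n₂)) :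
    bipartitePairing n₁ n₂ e f → bipartitePairing n₁ n₂ e f' → f = f' := by
  rintro ⟨x, y, u, hxy, hq, rfl, rfl⟩ ⟨x', y', u', hxy', hq', he, rfl⟩
  simp only [Sym2.eq, Sym2.rel_iff', Prod.mk.injEq, Sum.inl.injEq, Sum.inr.injEq,
    Prod.swap_prod_mk, reduceCtorEq, and_self, or_false] at he
  obtain ⟨rfl, rfl⟩ := he
  rw [Fin.ext (by omega : y.val = y'.val)]

lemma ncard_neighborSet_completeBipartiteGraph_inr {V W : Type*} [Finite V] (w : W) :
    ((completeBipartiteGraph V W).neighborSet (.inr w)).ncard = Nat.card V := by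
  have : (completeBipartiteGraph V W).neighborSet (.inr w) = Set.range Sum.inl := by
    ext v; cases v <;> simp
  rw [this, Set.ncard_range_of_injective Sum.inl_injective]

lemma not_hasCopy_star_of_unpaired {m : ℕ} (hn₂ : n₂ < m) (hn₁ : n₁ < 2 * m - 1)
    {s : Set (Sym2 (Fin n₁ ⊕ Fin n₂))}
    (hs : s ⊆ (completeBipartiteGraph (Fin n₁) (Fin n₂)).edgeSet)
    (hunpaired : ∀ a ∈ s, ∀ b ∈ s, a ≠ b → ¬ bipartitePairing n₁ n₂ a b) :
    ¬ HasCopy (star m) s := by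
  intro hcopy
  obtain ⟨v, w, hw, hwv⟩ := hasCopy_star_iff.1 hcopy
  have hadj (i : Fin m) : (completeBipartiteGraph (Fin n₁) (Fin n₂)).Adj v (w i) := hs (hwv i).2
  cases v with
  | inl x =>
    have (i : Fin m) : ∃ u, w i = .inr u := by simpa [Sum.isRight_iff] using hadj i
    choose u hu using this
    have := Fintype.card_le_of_injective u fun i j hij => hw (by rw [hu, hu, hij])
    simp only [Fintype.card_fin] at this
    omega
  | inr u =>
    have (i : Fin m) : ∃ x, w i = .inl x := by simpa [Sum.isLeft_iff] using hadj i
    choose x hx using this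
    have hblock :
        Function.Injective fun i => (⟨(x i).val / 2, by omega⟩ : Fin ((n₁ + 1) / 2)) := by
      intro i j hij
      by_contra hne
      have hxne : x i ≠ x j := fun h => hne (hw (by rw [hx, hx, h]))
      refine hunpaired _ (hwv i).2 _ (hwv j).2 (by simpa [hx] using hxne)
        ⟨x i, x j, u, hxne, Fin.mk.inj_iff.1 hij, ?_, ?_⟩ <;> rw [hx, Sym2.eq_swap]
    have := Fintype.card_le_of_injective _ hblock
    simp only [Fintype.card_fin] at this
    omega

theorem not_aliceWins_star_completeBipartiteGraph {m : ℕ} (hn₂ : n₂ < m)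
    (hn₁ : n₁ < 2 * m - 1) :
    ¬ AliceWins (star m) (completeBipartiteGraph (Fin n₁) (Fin n₂)) := by
  rintro ⟨σ, hσ, hwin⟩
  have : Nonempty (Fin n₁ ⊕ Fin n₂) := Sym2.ind (fun a _ => ⟨a⟩) (σ [])
  obtain ⟨k, hk, hblue, -⟩ := hwin (pairingStrategy _ (bipartitePairing n₁ n₂))
    Strategy.prefer_valid
  refine not_hasCopy_star_of_unpaired hn₂ hn₁ ?_ ?_ hblue
  · rintro _ ⟨i, hi, rfl⟩
    exact (move_legal hσ Strategy.prefer_valid (by omega)).1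
  · rintro _ ⟨i, hi, rfl⟩ _ ⟨j, hj, rfl⟩ hne
    exact not_rel_move_pairingStrategy bipartitePairing_symm bipartitePairing_unique hσ
      (fun h => hne (h ▸ rfl)) (by omega) (by omega)

end CompleteBipartite

end AchievementGame

open AchievementGame

theorem stmt14_general (m n₁ n₂ : ℕ) (h₁ : 1 ≤ n₂)
    (h₂ : n₂ ≤ m - 1) :
    AliceWins (star m) (completeBipartiteGraph (Fin n₁) (Fin n₂)) ↔ 2 * m - 1 ≤ n₁ := by
  refine ⟨fun hwin => ?_, fun hn₁ => ?_⟩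
  · by_contra hlt
    exact not_aliceWins_star_completeBipartiteGraph (by omega) (by omega) hwin
  · refine aliceWins_star_of_le_ncard_neighborSet (by omega) (.inr ⟨0, h₁⟩) ?_
    rwa [ncard_neighborSet_completeBipartiteGraph_inr, Nat.card_fin]

/-- Let `m ≥ 2` and let `n₁, n₂` be integers with `n₁ ≥ n₂` and `1 ≤ n₂ ≤ m − 1`.
Alice has a winning strategy in the achievement game `(K_{1,m}, K_{n₁,n₂}, +)` if and
only if `n₁ ≥ 2m − 1`. -/
theorem stmt14 (m n₁ n₂ : ℕ) (hm : 2 ≤ m) (h : n₂ ≤ n₁) (h₁ : 1 ≤ n₂)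
    (h₂ : n₂ ≤ m - 1) :
    AliceWins (star m) (completeBipartiteGraph (Fin n₁) (Fin n₂)) ↔ 2 * m - 1 ≤ n₁ :=
  stmt14_general m n₁ n₂ h₁ h₂
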